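/- arXiv:1511.05257 — 3 statements merged into one kernel-verified Lean document; each statement's English description precedes it below -/
import Mathlib

section
/- Let φ be a continuous flow on a compact metric space X, g : X → ℝ continuous, and suppose that for every N ∈ ℕ and every ε > 0 and every x ∈ X there exists a nonempty open set U ⊆ B(x, ε) such that every z ∈ U has (N, 1/2)-historic behavior with respect to g. Then there is a residual subset ℋ of X such that every forward orbit starting in ℋ has historic behavior. -/
open MeasureTheory Filter Metric

/-- If for every `N ∈ ℕ`, every `ε > 0` and every `x` there is a nonempty open set
`U ⊆ B(x, ε)` all of whose points have `(N, 1/2)`-historic behavior with respect to `g`,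
then there is a residual set `ℋ` every point of which has historic behavior (the time
average of `g` along its forward orbit does not converge). -/
theorem stmt11 {X : Type*} [MetricSpace X] [CompactSpace X]
    (φ : X → ℝ → X) (hφ : Continuous fun p : X × ℝ => φ p.1 p.2)
    (hflow0 : ∀ p, φ p 0 = p) (hflow : ∀ p s t, φ (φ p s) t = φ p (s + t))
    (g : X → ℝ) (hg : Continuous g)
    (hyp : ∀ N : ℕ, ∀ ε > (0:ℝ), ∀ x : X, ∃ U : Set X, IsOpen U ∧ U.Nonempty ∧
      U ⊆ Metric.ball x ε ∧ ∀ z ∈ U, ∃ τ₀ τ₁ : ℝ, (N : ℝ) ≤ τ₀ ∧ (N : ℝ) ≤ τ₁ ∧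
        (1/2 : ℝ) ≤ |(1 / τ₀) * (∫ t in (0:ℝ)..τ₀, g (φ z t))
            - (1 / τ₁) * (∫ t in (0:ℝ)..τ₁, g (φ z t))|) :
    ∃ ℋ : Set X, ℋ ∈ residual X ∧ ∀ z ∈ ℋ,
      ¬ ∃ L : ℝ, Tendsto (fun t : ℝ => (1 / t) * ∫ s in (0:ℝ)..t, g (φ z s))
        atTop (nhds L) := by
  -- P N z : the (N, 1/2)-historic property
  set P : ℕ → X → Prop := fun N z => ∃ τ₀ τ₁ : ℝ, (N : ℝ) ≤ τ₀ ∧ (N : ℝ) ≤ τ₁ ∧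
      (1/2 : ℝ) ≤ |(1 / τ₀) * (∫ t in (0:ℝ)..τ₀, g (φ z t))
          - (1 / τ₁) * (∫ t in (0:ℝ)..τ₁, g (φ z t))| with hP
  set W : ℕ → Set X := fun N => interior {z | P N z} with hW
  have hWopen : ∀ N, IsOpen (W N) := fun N => isOpen_interior
  have hWdense : ∀ N, Dense (W N) := by
    intro N
    rw [Metric.dense_iff]
    intro x ε hε
    obtain ⟨U, hUo, ⟨u, hu⟩, hUb, hUP⟩ := hyp N ε hε x
    exact ⟨u, hUb hu, hUo.subset_interior_iff.mpr (fun z hz => hUP z hz) hu⟩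
  refine ⟨⋂ N, W N, ?_, ?_⟩
  · exact residual_of_dense_Gδ (IsGδ.iInter_of_isOpen hWopen)
      (dense_iInter_of_isOpen hWopen hWdense)
  · rintro z hz ⟨L, hL⟩
    rw [Metric.tendsto_atTop] at hL
    obtain ⟨T, hT⟩ := hL (1/8) (by norm_num)
    obtain ⟨N, hN⟩ := exists_nat_ge T
    have hzP : P N z := by
      have h := Set.mem_iInter.mp hz N
      rw [hW] at h
      have h2 : z ∈ {w | P N w} := interior_subset h
      exact h2
    obtain ⟨τ₀, τ₁, h₀, h₁, hsep⟩ := hzP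
    have d0 := hT τ₀ (le_trans hN h₀)
    have d1 := hT τ₁ (le_trans hN h₁)
    rw [Real.dist_eq] at d0 d1
    have habs := abs_sub_le ((1 / τ₀) * (∫ t in (0:ℝ)..τ₀, g (φ z t))) L
        ((1 / τ₁) * (∫ t in (0:ℝ)..τ₁, g (φ z t)))
    rw [abs_sub_comm L] at habs
    linarith
end

section
/- Let α : [-1,1]\{0} → [-1,1] satisfy α(-x) = -α(x), lim_{x→0+} α(x) = -1, α(1) < 1, and α'(x) > √2 on (0,1]. Then for every nonempty open interval I ⊆ [-1,1] there exists n ∈ ℕ such that 0 ∈ αⁿ(I) (interpreting iterates on the maximal subinterval avoiding the discontinuity), i.e., some iterate of I covers a neighborhood of the discontinuity. -/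
open Filter

/-- Locally eventually onto property of the one-dimensional Lorenz map: under the
hypotheses `α(-x) = -α(x)`, `lim_{x→0+} α(x) = -1`, `α(1) < 1`, and `α' > √2` on `(0,1]`
(with `α` mapping `[-1,1] \ {0}` into `[-1,1]`), every nonempty open subinterval of
`[-1,1]` has some iterate whose image contains `0`. -/
theorem stmt12 (α : ℝ → ℝ)
    (hmap : ∀ x ∈ Set.Icc (-1 : ℝ) 1, x ≠ 0 → α x ∈ Set.Icc (-1 : ℝ) 1)
    (hodd : ∀ x, α (-x) = -α x)
    (hlim : Tendsto α (nhdsWithin 0 (Set.Ioi 0)) (nhds (-1 : ℝ)))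
    (hα1 : α 1 < 1)
    (hderiv : ∀ x ∈ Set.Ioc (0:ℝ) 1, HasDerivAt α (deriv α x) x ∧ Real.sqrt 2 < deriv α x) :
    ∀ a b : ℝ, -1 ≤ a → b ≤ 1 → a < b →
      ∃ n : ℕ, (0 : ℝ) ∈ α^[n] '' Set.Ioo a b := by
  intro a b ha hb hab
  by_contra hcon
  push_neg at hcon
  -- `α t = -α (-t)` for all t
  have hoddsym : ∀ t : ℝ, α t = -α (-t) := by
    intro t
    rw [hodd t]; ring
  have sqrt2_pos : (0:ℝ) < Real.sqrt 2 := Real.sqrt_pos.mpr (by norm_num)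
  have one_lt_sqrt2 : (1:ℝ) < Real.sqrt 2 := by
    rw [show (1:ℝ) = Real.sqrt 1 by simp]
    exact Real.sqrt_lt_sqrt (by norm_num) (by norm_num)
  -- expansion on the positive side
  have key : ∀ x y : ℝ, x ∈ Set.Ioc (0:ℝ) 1 → y ∈ Set.Ioc (0:ℝ) 1 → x < y →
      Real.sqrt 2 * (y - x) ≤ α y - α x := by
    intro x y hx hy hxy
    have hsub : Set.Icc x y ⊆ Set.Ioc (0:ℝ) 1 :=
      fun t ht => ⟨lt_of_lt_of_le hx.1 ht.1, le_trans ht.2 hy.2⟩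
    have hc : ContinuousOn α (Set.Icc x y) :=
      fun t ht => ((hderiv t (hsub ht)).1.continuousAt).continuousWithinAt
    have hd : ∀ t ∈ Set.Ioo x y, HasDerivAt α (deriv α t) t :=
      fun t ht => (hderiv t (hsub ⟨le_of_lt ht.1, le_of_lt ht.2⟩)).1
    obtain ⟨c, hc1, hc2⟩ := exists_hasDerivAt_eq_slope α (deriv α) hxy hc hd
    have hslope : Real.sqrt 2 < (α y - α x) / (y - x) := by
      rw [← hc2]
      exact (hderiv c (hsub ⟨le_of_lt hc1.1, le_of_lt hc1.2⟩)).2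
    have hpos : (0:ℝ) < y - x := by linarith
    have := (lt_div_iff₀ hpos).mp hslope
    linarith
  -- expansion on the negative side, via oddness
  have keyneg : ∀ x y : ℝ, x ∈ Set.Ico (-1:ℝ) 0 → y ∈ Set.Ico (-1:ℝ) 0 → x < y →
      Real.sqrt 2 * (y - x) ≤ α y - α x := by
    intro x y hx hy hxy
    have h1 := key (-y) (-x) ⟨by linarith [hy.2], by linarith [hy.1]⟩
      ⟨by linarith [hx.2], by linarith [hx.1]⟩ (by linarith)
    have h2 : α (-x) = -α x := hodd x
    have h3 : α (-y) = -α y := hodd y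
    rw [h2, h3] at h1
    linarith
  -- continuity off 0 in [-1,1]
  have hcont : ∀ z : ℝ, z ∈ Set.Ioc (0:ℝ) 1 ∪ Set.Ico (-1:ℝ) 0 → ContinuousAt α z := by
    intro z hz
    rcases hz with hz | hz
    · exact (hderiv z hz).1.continuousAt
    · have hnz : -z ∈ Set.Ioc (0:ℝ) 1 := ⟨by linarith [hz.2], by linarith [hz.1]⟩
      have h1 : ContinuousAt α (-z) := (hderiv (-z) hnz).1.continuousAt
      have h2 : ContinuousAt (fun t : ℝ => -α (-t)) z := by
        exact (h1.comp (continuous_neg.continuousAt)).neg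
      have hfun : α = fun t : ℝ => -α (-t) := funext hoddsym
      rw [hfun]
      exact h2
  set δ : ℝ := (b - a) / 2 with hδ
  have hδpos : 0 < δ := by rw [hδ]; linarith
  -- main induction
  have main : ∀ n : ℕ, ∃ x y : ℝ, x ∈ α^[n] '' Set.Ioo a b ∧ y ∈ α^[n] '' Set.Ioo a b ∧
      Real.sqrt 2 ^ n * δ ≤ y - x ∧ IsPreconnected (α^[n] '' Set.Ioo a b) ∧
      α^[n] '' Set.Ioo a b ⊆ Set.Icc (-1:ℝ) 1 := by
    intro n
    induction n with
    | zero =>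
      refine ⟨a + (b - a) / 4, b - (b - a) / 4, ?_, ?_, ?_, ?_, ?_⟩
      · simp only [Function.iterate_zero, Set.image_id]
        constructor <;> [linarith; linarith]
      · simp only [Function.iterate_zero, Set.image_id]
        constructor <;> [linarith; linarith]
      · simp only [pow_zero, one_mul, hδ]; linarith
      · simpa only [Function.iterate_zero, Set.image_id] using isPreconnected_Ioo
      · simp only [Function.iterate_zero, Set.image_id]
        intro t ht
        exact ⟨by linarith [ht.1], by linarith [ht.2]⟩
    | succ n ih =>
      obtain ⟨x, y, hx, hy, hxy, hpre, hsub⟩ := ih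
      have hne0 : (0:ℝ) ∉ α^[n] '' Set.Ioo a b := hcon n
      have hxlty : x < y := by
        have : 0 < Real.sqrt 2 ^ n * δ := mul_pos (pow_pos sqrt2_pos n) hδpos
        linarith
      have hord : Set.OrdConnected (α^[n] '' Set.Ioo a b) := hpre.ordConnected
      -- the image lies entirely on one side of 0
      have hside : (α^[n] '' Set.Ioo a b) ⊆ Set.Ioc (0:ℝ) 1 ∨
          (α^[n] '' Set.Ioo a b) ⊆ Set.Ico (-1:ℝ) 0 := by
        by_cases hp : ∀ z ∈ α^[n] '' Set.Ioo a b, 0 < z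
        · left
          intro z hz
          exact ⟨hp z hz, (hsub hz).2⟩
        · right
          push_neg at hp
          obtain ⟨z, hz, hz0⟩ := hp
          have hzneg : z < 0 := lt_of_le_of_ne hz0 (fun h => hne0 (h ▸ hz))
          intro w hw
          refine ⟨(hsub hw).1, ?_⟩
          by_contra hw0
          push_neg at hw0
          have hwpos : 0 < w := lt_of_le_of_ne hw0 (fun h => hne0 (h.symm ▸ hw))
          exact hne0 (hord.out hz hw ⟨le_of_lt hzneg, le_of_lt hwpos⟩)
      have himgstep : α^[n+1] '' Set.Ioo a b = α '' (α^[n] '' Set.Ioo a b) := by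
        rw [Function.iterate_succ', Set.image_comp]
      have hcontOn : ContinuousOn α (α^[n] '' Set.Ioo a b) := by
        intro z hz
        rcases hside with hside | hside
        · exact (hcont z (Or.inl (hside hz))).continuousWithinAt
        · exact (hcont z (Or.inr (hside hz))).continuousWithinAt
      have hpre' : IsPreconnected (α^[n+1] '' Set.Ioo a b) := by
        rw [himgstep]
        exact hpre.image α hcontOn
      have hsub' : α^[n+1] '' Set.Ioo a b ⊆ Set.Icc (-1:ℝ) 1 := by
        rw [himgstep]
        rintro _ ⟨z, hz, rfl⟩
        have hzne : z ≠ 0 := fun h => hne0 (h ▸ hz)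
        exact hmap z (hsub hz) hzne
      have hgrow : Real.sqrt 2 * (y - x) ≤ α y - α x := by
        rcases hside with hside | hside
        · exact key x y (hside hx) (hside hy) hxlty
        · exact keyneg x y (hside hx) (hside hy) hxlty
      refine ⟨α x, α y, ?_, ?_, ?_, hpre', hsub'⟩
      · rw [himgstep]; exact Set.mem_image_of_mem α hx
      · rw [himgstep]; exact Set.mem_image_of_mem α hy
      · have h1 : Real.sqrt 2 ^ (n+1) * δ = Real.sqrt 2 * (Real.sqrt 2 ^ n * δ) := by
          rw [pow_succ]; ring
        have h2 : Real.sqrt 2 * (Real.sqrt 2 ^ n * δ) ≤ Real.sqrt 2 * (y - x) :=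
          mul_le_mul_of_nonneg_left hxy (le_of_lt sqrt2_pos)
        linarith
  -- obtain n with √2^n * δ > 2, contradiction with diameter ≤ 2
  obtain ⟨n, hn⟩ := pow_unbounded_of_one_lt (2 / δ) one_lt_sqrt2
  obtain ⟨x, y, hx, hy, hxy, _, hsub⟩ := main n
  have hx' := hsub hx
  have hy' := hsub hy
  have h2 : 2 < Real.sqrt 2 ^ n * δ := by
    have := (div_lt_iff₀ hδpos).mp hn
    linarith
  have : y - x ≤ 2 := by
    have := hx'.1; have := hy'.2; linarith
  linarith
end

section
/- Under the conditions α(-x) = -α(x), lim_{x→0+}α(x) = -1, α(1) < 1, and α'(x) > √2 for x ∈ (0,1], the Lorenz map α has a periodic point x_per of period two. -/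
open Filter

/-- The one-dimensional Lorenz map has a periodic point of period two: there is
`x ∈ (0,1]` with `α(x) < 0` and `α(α(x)) = x`. -/
theorem stmt13 (α : ℝ → ℝ)
    (hmap : ∀ x ∈ Set.Icc (-1 : ℝ) 1, x ≠ 0 → α x ∈ Set.Icc (-1 : ℝ) 1)
    (hodd : ∀ x, α (-x) = -α x)
    (hlim : Tendsto α (nhdsWithin 0 (Set.Ioi 0)) (nhds (-1 : ℝ)))
    (hα1 : α 1 < 1)
    (hderiv : ∀ x ∈ Set.Ioc (0:ℝ) 1, HasDerivAt α (deriv α x) x ∧ Real.sqrt 2 < deriv α x) :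
    ∃ x : ℝ, 0 < x ∧ x ≤ 1 ∧ α x < 0 ∧ α (α x) = x := by
  -- Find δ ∈ (0, 1/2) with α δ < -1/2, using the limit.
  have hev : ∀ᶠ x in nhdsWithin 0 (Set.Ioi (0:ℝ)), α x < -1/2 :=
    hlim.eventually (gt_mem_nhds (by norm_num))
  have hev2 : ∀ᶠ x in nhdsWithin 0 (Set.Ioi (0:ℝ)), x < 1/2 := by
    filter_upwards [eventually_nhdsWithin_of_eventually_nhds
      (eventually_lt_nhds (by norm_num : (0:ℝ) < 1/2))] with x hx using hx
  have hev3 : ∀ᶠ x in nhdsWithin 0 (Set.Ioi (0:ℝ)), x ∈ Set.Ioi (0:ℝ) :=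
    eventually_mem_nhdsWithin
  obtain ⟨δ, hδα, hδhalf, hδpos⟩ := (hev.and (hev2.and hev3)).exists
  simp only [Set.mem_Ioi] at hδpos
  have hδ1 : δ ≤ 1 := by linarith
  -- α is continuous on [δ, 1]
  have hcont : ContinuousOn (fun x => α x + x) (Set.Icc δ 1) := by
    intro x hx
    have hx' : x ∈ Set.Ioc (0:ℝ) 1 := ⟨lt_of_lt_of_le hδpos hx.1, hx.2⟩
    exact (((hderiv x hx').1.continuousAt).add continuous_id.continuousAt).continuousWithinAt
  have h1 : (-1 : ℝ) ≤ α 1 := (hmap 1 (by norm_num) one_ne_zero).1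
  have hmem : (0:ℝ) ∈ Set.Icc (α δ + δ) (α 1 + 1) := ⟨by linarith, by linarith⟩
  obtain ⟨x, hxmem, hx0⟩ := intermediate_value_Icc hδ1 hcont hmem
  have hxpos : 0 < x := lt_of_lt_of_le hδpos hxmem.1
  simp only [] at hx0
  have hax : α x = -x := by linarith
  refine ⟨x, hxpos, hxmem.2, by rw [hax]; linarith, ?_⟩
  rw [hax, hodd, hax, neg_neg]
end
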